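/- arXiv:2504.11033 — 3 statements merged into one kernel-verified Lean document; each statement's English description precedes it below -/
import Mathlib

section
/- Let X be a complex Banach space, M ≥ 1, and let A be a positive operator on X with constant M. Set θ_M = arcsin(1/(2M)) and Ξ_M = {z ∈ ℂ : |arg z| ≤ θ_M} ∪ {z ∈ ℂ : |z| ≤ 1/(2M)}. Then for every λ ∈ Ξ_M the operator λ + A : D(A) → X is bijective with bounded inverse (λ+A)^{-1} ∈ L(X), and (1 + |λ|)·‖(λ+A)^{-1}‖ ≤ 2M + 1. -/
open MeasureTheory Real Set

noncomputable section

/-- `R` is a two-sided bounded inverse of `lam + A : D(A) → X`;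
in particular `lam + A` is bijective from `D(A)` onto `X` with bounded inverse `R`. -/
def ResolventAt {X : Type*} [NormedAddCommGroup X] [NormedSpace ℂ X]
    (A : X →ₗ.[ℂ] X) (lam : ℂ) (R : X →L[ℂ] X) : Prop :=
  (∀ x : A.domain, R (lam • (x : X) + A x) = x) ∧
  (∀ y : X, ∃ h : R y ∈ A.domain, lam • R y + A ⟨R y, h⟩ = y)

/-- `A` is a positive operator with constant `M ≥ 1` and resolvent family `R`. -/
structure IsPositive {X : Type*} [NormedAddCommGroup X] [NormedSpace ℂ X]
    (A : X →ₗ.[ℂ] X) (M : ℝ) (R : ℝ → X →L[ℂ] X) : Prop where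
  dense_domain : Dense (A.domain : Set X)
  closed_graph : IsClosed (A.graph : Set (X × X))
  one_le : 1 ≤ M
  resolvent : ∀ s : ℝ, 0 ≤ s → ResolventAt A (s : ℂ) (R s)
  bound : ∀ s : ℝ, 0 ≤ s → (1 + s) * ‖R s‖ ≤ M

/-!
If `‖(λ - s) R(s)‖ ≤ 1/2`, then `λ + A = (s + A)(1 + (λ - s) R(s))` is boundedly invertible with
`‖(λ + A)⁻¹‖ ≤ 2 ‖R(s)‖` (Neumann series). With `(1 + s) ‖R(s)‖ ≤ M` this applies as soon as
`2M |λ - s| ≤ 1 + s`, and then `1 + |λ| ≤ (1 + s)(1 + 1/(2M))` gives the bound `2M + 1`.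
Such an `s ≥ 0` exists on `Ξ_M`: near the origin take `s = 0`; in the sector take
`s = |λ|² / Re λ`, where the line through `λ` perpendicular to `[0, λ]` meets the real axis;
then `|λ - s| = s |sin (arg λ)| ≤ s / (2M)`.
-/

theorem Units.norm_inv_le_of_val_eq_one_add {R : Type*} [NormedRing R] {u : Rˣ} {t : R}
    (hu : (u : R) = 1 + t) (ht : ‖t‖ < 1) :
    ‖(↑u⁻¹ : R)‖ ≤ ‖(1 : R)‖ / (1 - ‖t‖) := by
  have hinv : (↑u⁻¹ : R) = 1 - t * ↑u⁻¹ := by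
    rw [eq_sub_iff_add_eq, ← one_add_mul, ← hu, u.mul_inv]
  have hle : ‖(↑u⁻¹ : R)‖ ≤ ‖(1 : R)‖ + ‖t‖ * ‖(↑u⁻¹ : R)‖ :=
    calc ‖(↑u⁻¹ : R)‖ = ‖1 - t * ↑u⁻¹‖ := by rw [← hinv]
      _ ≤ ‖(1 : R)‖ + ‖t * ↑u⁻¹‖ := norm_sub_le _ _
      _ ≤ ‖(1 : R)‖ + ‖t‖ * ‖(↑u⁻¹ : R)‖ := by gcongr; exact norm_mul_le _ _
  rw [le_div_iff₀ (by linarith)]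
  linarith [hle]

namespace ResolventAt

variable {X : Type*} [NormedAddCommGroup X] [NormedSpace ℂ X] {A : X →ₗ.[ℂ] X} {z : ℂ}
  {R : X →L[ℂ] X}

theorem add_of_val_eq (hR : ResolventAt A z R) {μ : ℂ} {u : (X →L[ℂ] X)ˣ}
    (hu : (u : X →L[ℂ] X) = 1 + μ • R) : ResolventAt A (z + μ) (R * ↑u⁻¹) := by
  have hu_apply (x : X) : (u : X →L[ℂ] X) x = x + μ • R x := by
    rw [hu, add_apply, one_apply_eq_self, smul_apply]
  have hcomm : Commute R (↑u⁻¹ : X →L[ℂ] X) :=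
    (hu ▸ (Commute.one_right R).add_right ((Commute.refl R).smul_right _)).units_inv_right
  constructor
  · intro x
    rw [hcomm.eq, mul_apply_eq_comp, add_smul, add_right_comm, map_add, hR.1 x, map_smul,
      ← hu_apply, ← mul_apply_eq_comp, u.inv_mul, one_apply_eq_self]
  · intro y
    set w := (↑u⁻¹ : X →L[ℂ] X) y with hw
    obtain ⟨hdom, hy⟩ := hR.2 w
    refine ⟨hdom, ?_⟩
    change (z + μ) • R w + A ⟨R w, hdom⟩ = y
    rw [add_smul, add_right_comm, hy, ← hu_apply, hw, ← mul_apply_eq_comp, u.mul_inv,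
      one_apply_eq_self]

theorem exists_of_norm_sub_mul_lt_one [CompleteSpace X] (hR : ResolventAt A z R) {lam : ℂ}
    (h : ‖lam - z‖ * ‖R‖ < 1) :
    ∃ R' : X →L[ℂ] X, ResolventAt A lam R' ∧ ‖R'‖ ≤ ‖R‖ / (1 - ‖lam - z‖ * ‖R‖) := by
  set t := (lam - z) • R
  have ht : ‖t‖ = ‖lam - z‖ * ‖R‖ := norm_smul _ _
  let u := Units.oneSub (-t) (by rwa [norm_neg, ht])
  have hu : (u : X →L[ℂ] X) = 1 + t := sub_neg_eq_add 1 t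
  refine ⟨R * ↑u⁻¹, add_sub_cancel z lam ▸ hR.add_of_val_eq hu, ?_⟩
  have hu_inv : ‖(↑u⁻¹ : X →L[ℂ] X)‖ ≤ 1 / (1 - ‖lam - z‖ * ‖R‖) := by
    rw [← ht]
    refine (Units.norm_inv_le_of_val_eq_one_add hu (ht ▸ h)).trans ?_
    gcongr
    · linarith
    · exact ContinuousLinearMap.norm_id_le
  calc ‖R * ↑u⁻¹‖ ≤ ‖R‖ * ‖(↑u⁻¹ : X →L[ℂ] X)‖ := norm_mul_le _ _
    _ ≤ ‖R‖ * (1 / (1 - ‖lam - z‖ * ‖R‖)) := by gcongr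
    _ = ‖R‖ / (1 - ‖lam - z‖ * ‖R‖) := mul_one_div _ _

end ResolventAt

theorem IsPositive.exists_resolventAt_of_two_mul_norm_sub_le {X : Type*} [NormedAddCommGroup X]
    [NormedSpace ℂ X] [CompleteSpace X] {A : X →ₗ.[ℂ] X} {M : ℝ} {R : ℝ → X →L[ℂ] X}
    (hA : IsPositive A M R) {s : ℝ} (hs : 0 ≤ s) {lam : ℂ} (hd : 2 * M * ‖lam - s‖ ≤ 1 + s) :
    ∃ Rlam : X →L[ℂ] X, ResolventAt A lam Rlam ∧ (1 + ‖lam‖) * ‖Rlam‖ ≤ 2 * M + 1 := by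
  have hM : 0 < M := by linarith [hA.one_le]
  have hs1 : 0 < 1 + s := by linarith
  have hR : ‖R s‖ ≤ M / (1 + s) := by
    rw [le_div_iff₀ hs1, mul_comm]; exact hA.bound s hs
  have hdist : ‖lam - s‖ ≤ (1 + s) / (2 * M) := by
    rw [le_div_iff₀ (by positivity), mul_comm]; exact hd
  have hsmall : ‖lam - s‖ * ‖R s‖ ≤ 1 / 2 :=
    calc ‖lam - s‖ * ‖R s‖ ≤ (1 + s) / (2 * M) * (M / (1 + s)) := by gcongr
      _ = 1 / 2 := by field_simp
  obtain ⟨Rlam, hRlam, hnorm⟩ :=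
    (hA.resolvent s hs).exists_of_norm_sub_mul_lt_one (lam := lam) (by linarith)
  refine ⟨Rlam, hRlam, ?_⟩
  have hRlam_norm : ‖Rlam‖ ≤ 2 * (M / (1 + s)) := by
    refine hnorm.trans ?_
    rw [div_le_iff₀ (by linarith)]
    nlinarith [norm_nonneg (R s)]
  have hlam : 1 + ‖lam‖ ≤ (1 + s) / (2 * M) * (2 * M + 1) :=
    calc 1 + ‖lam‖ ≤ 1 + (‖(s : ℂ)‖ + ‖lam - s‖) := by
          gcongr; exact norm_le_insert' lam (s : ℂ)
      _ ≤ 1 + (s + (1 + s) / (2 * M)) := by rw [Complex.norm_of_nonneg hs]; gcongr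
      _ = (1 + s) / (2 * M) * (2 * M + 1) := by field_simp; ring
  calc (1 + ‖lam‖) * ‖Rlam‖ ≤ (1 + s) / (2 * M) * (2 * M + 1) * (2 * (M / (1 + s))) := by
        gcongr
    _ = 2 * M + 1 := by field_simp

theorem Real.abs_sin_le_of_abs_le_arcsin {θ x : ℝ} (h : |θ| ≤ arcsin x) : |sin θ| ≤ x := by
  have hθ : |θ| ≤ π / 2 := h.trans (arcsin_le_pi_div_two x)
  rw [abs_sin_eq_sin_abs_of_abs_le_pi (by linarith [pi_pos])]
  exact (le_arcsin_iff_sin_le' ⟨by linarith [abs_nonneg θ, pi_pos], hθ⟩).1 h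

theorem Complex.abs_im_le_of_abs_arg_le_arcsin {z : ℂ} {x : ℝ} (h : |z.arg| ≤ arcsin x) :
    |z.im| ≤ x * ‖z‖ := by
  rcases eq_or_ne z 0 with rfl | hz
  · simp
  have hsin := Real.abs_sin_le_of_abs_le_arcsin h
  rwa [Complex.sin_arg, abs_div, abs_norm, div_le_iff₀ (norm_pos_iff.2 hz)] at hsin

theorem Complex.norm_sub_normSq_div_re {z : ℂ} (hz : 0 < z.re) :
    ‖z - ((‖z‖ ^ 2 / z.re : ℝ) : ℂ)‖ = |z.im| * ‖z‖ / z.re := by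
  rw [← sq_eq_sq₀ (norm_nonneg _) (by positivity), Complex.sq_norm, Complex.normSq_apply,
    div_pow, mul_pow, sq_abs, Complex.sq_norm, Complex.normSq_apply]
  simp only [Complex.sub_re, Complex.sub_im, Complex.ofReal_re, Complex.ofReal_im, sub_zero]
  field_simp
  ring

theorem exists_nonneg_two_mul_norm_sub_le {M : ℝ} (hM : 1 < 2 * M) {lam : ℂ}
    (hlam : |lam.arg| ≤ Real.arcsin (1 / (2 * M)) ∨ ‖lam‖ ≤ 1 / (2 * M)) :
    ∃ s : ℝ, 0 ≤ s ∧ 2 * M * ‖lam - s‖ ≤ 1 + s := by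
  have hM0 : 0 < M := by linarith
  rcases hlam with hsector | hdisk
  · have harg : |lam.arg| < π / 2 :=
      hsector.trans_lt (arcsin_lt_pi_div_two.2 ((div_lt_one (by positivity)).2 hM))
    rcases Complex.abs_arg_lt_pi_div_two_iff.1 harg with hre | rfl
    · refine ⟨‖lam‖ ^ 2 / lam.re, by positivity, ?_⟩
      have him := Complex.abs_im_le_of_abs_arg_le_arcsin hsector
      rw [Complex.norm_sub_normSq_div_re hre]
      calc 2 * M * (|lam.im| * ‖lam‖ / lam.re)
          ≤ 2 * M * (1 / (2 * M) * ‖lam‖ * ‖lam‖ / lam.re) := by gcongr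
        _ = ‖lam‖ ^ 2 / lam.re := by field_simp
        _ ≤ 1 + ‖lam‖ ^ 2 / lam.re := by linarith
    · exact ⟨0, le_rfl, by simp⟩
  · refine ⟨0, le_rfl, ?_⟩
    rw [le_div_iff₀ (by positivity)] at hdisk
    simpa [mul_comm] using hdisk

theorem stmt0 {X : Type*} [NormedAddCommGroup X] [NormedSpace ℂ X] [CompleteSpace X]
    (M : ℝ) (A : X →ₗ.[ℂ] X) (R : ℝ → X →L[ℂ] X) (hA : IsPositive A M R)
    (lam : ℂ)
    (hlam : |lam.arg| ≤ Real.arcsin (1 / (2 * M)) ∨ ‖lam‖ ≤ 1 / (2 * M)) :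
    ∃ Rlam : X →L[ℂ] X, ResolventAt A lam Rlam ∧
      (1 + ‖lam‖) * ‖Rlam‖ ≤ 2 * M + 1 := by
  obtain ⟨s, hs, hd⟩ := exists_nonneg_two_mul_norm_sub_le (by linarith [hA.one_le]) hlam
  exact hA.exists_resolventAt_of_two_mul_norm_sub_le hs hd
end
end

section
/- Let X be a complex Banach space and A a positive operator on X with constant M ≥ 1. For every α ∈ (0,1), the Bochner integral A^{-α} := (sin(πα)/π) ∫₀^∞ s^{-α} (s+A)^{-1} ds converges in L(X) and satisfies ‖A^{-α}‖ ≤ M; in particular the family (A^{-α})_{α∈(0,1)} is uniformly bounded. -/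
open MeasureTheory Real Set

noncomputable section

/-- The Balakrishnan fractional power `A ^ (-α)`, expressed through the
resolvent family `R` of `A`:  `A⁻ᵅ = (sin (π α) / π) ∫₀^∞ s⁻ᵅ (s+A)⁻¹ ds`. -/
def negPow {X : Type*} [NormedAddCommGroup X] [NormedSpace ℂ X]
    (R : ℝ → X →L[ℂ] X) (α : ℝ) : X →L[ℂ] X :=
  (Real.sin (π * α) / π) • ∫ s in Ioi (0 : ℝ), s ^ (-α) • R s

/-!
Since `‖(s + A)⁻¹‖ ≤ M / (1 + s)`, the integrand is dominated by `M s⁻ᵅ / (1 + s)`. The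
substitution `u = s / (1 + s)` turns `∫₀^∞ s^(a-1) / (1 + s)^(a+b) ds` into the Beta integral
`Γ(a) Γ(b) / Γ(a + b)`; for `a = 1 - α`, `b = α` the reflection formula evaluates it to
`π / sin (π α)`, which the prefactor of `A⁻ᵅ` cancels exactly. Measurability of the integrand
comes from the resolvent identity, which makes `s ↦ (s + A)⁻¹` Lipschitz on `[0, ∞)`.
-/

lemma ofReal_rpow_mul_one_sub_rpow {a b u : ℝ} (hu : u ∈ Icc 0 1) :
    ((u ^ (a - 1) * (1 - u) ^ (b - 1) : ℝ) : ℂ) =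
      (u : ℂ) ^ ((a : ℂ) - 1) * (1 - u) ^ ((b : ℂ) - 1) := by
  rw [Complex.ofReal_mul, Complex.ofReal_cpow hu.1, Complex.ofReal_cpow (sub_nonneg.2 hu.2)]
  push_cast
  rfl

lemma integrableOn_rpow_mul_one_sub_rpow {a b : ℝ} (ha : 0 < a) (hb : 0 < b) :
    IntegrableOn (fun u : ℝ => u ^ (a - 1) * (1 - u) ^ (b - 1)) (Ioo 0 1) := by
  have h := Complex.betaIntegral_convergent (u := a) (v := b) (by simpa) (by simpa)
  rw [intervalIntegrable_iff_integrableOn_Ioo_of_le zero_le_one] at h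
  refine IntegrableOn.congr_fun h.re (fun u hu => ?_) measurableSet_Ioo
  rw [← ofReal_rpow_mul_one_sub_rpow (Ioo_subset_Icc_self hu)]
  rfl

lemma integral_rpow_mul_one_sub_rpow {a b : ℝ} (ha : 0 < a) (hb : 0 < b) :
    ∫ u in Ioo (0 : ℝ) 1, u ^ (a - 1) * (1 - u) ^ (b - 1) =
      Gamma a * Gamma b / Gamma (a + b) := by
  rw [← ProbabilityTheory.beta, ProbabilityTheory.beta_eq_betaIntegralReal a b ha hb,
    Complex.betaIntegral, intervalIntegral.integral_of_le zero_le_one,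
    integral_Ioc_eq_integral_Ioo, ← RCLike.re_to_complex, ← integral_re]
  · refine setIntegral_congr_fun measurableSet_Ioo fun u hu => ?_
    rw [← ofReal_rpow_mul_one_sub_rpow (Ioo_subset_Icc_self hu)]
    rfl
  · have h := Complex.betaIntegral_convergent (u := a) (v := b) (by simpa) (by simpa)
    rwa [intervalIntegrable_iff_integrableOn_Ioo_of_le zero_le_one] at h

lemma hasDerivAt_div_one_add {x : ℝ} (hx : 1 + x ≠ 0) :
    HasDerivAt (fun s : ℝ => s / (1 + s)) ((1 + x) ^ 2)⁻¹ x := by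
  have h := (hasDerivAt_id' x).fun_div ((hasDerivAt_id' x).const_add 1) hx
  rwa [mul_one, one_mul, add_sub_cancel_right, one_div] at h

lemma injOn_div_one_add : InjOn (fun s : ℝ => s / (1 + s)) (Ioi 0) := by
  intro x hx y hy hxy
  rw [div_eq_div_iff (by linarith [mem_Ioi.1 hx]) (by linarith [mem_Ioi.1 hy])] at hxy
  linarith

lemma image_div_one_add_Ioi : (fun s : ℝ => s / (1 + s)) '' Ioi 0 = Ioo 0 1 := by
  ext u
  constructor
  · rintro ⟨s, hs : 0 < s, rfl⟩
    exact ⟨by positivity, (div_lt_one (by linarith)).2 (by linarith)⟩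
  · rintro ⟨hu0, hu1⟩
    refine ⟨u / (1 - u), div_pos hu0 (by linarith), ?_⟩
    have : 1 - u ≠ 0 := by linarith
    field_simp
    ring

section
variable {F : Type*} [NormedAddCommGroup F] [NormedSpace ℝ F]

lemma integrableOn_Ioo_zero_one_iff_integrableOn_Ioi (g : ℝ → F) :
    IntegrableOn g (Ioo 0 1) ↔
      IntegrableOn (fun s : ℝ => ((1 + s) ^ 2)⁻¹ • g (s / (1 + s))) (Ioi 0) := by
  rw [← image_div_one_add_Ioi,
    integrableOn_image_iff_integrableOn_abs_deriv_smul measurableSet_Ioi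
    (fun x (hx : 0 < x) => (hasDerivAt_div_one_add (by linarith)).hasDerivWithinAt)
    injOn_div_one_add]
  refine integrableOn_congr_fun (fun x _ => ?_) measurableSet_Ioi
  rw [abs_of_nonneg (by positivity)]

lemma integral_Ioo_zero_one_eq_integral_Ioi (g : ℝ → F) :
    ∫ u in Ioo 0 1, g u = ∫ s in Ioi 0, ((1 + s) ^ 2)⁻¹ • g (s / (1 + s)) := by
  rw [← image_div_one_add_Ioi, integral_image_eq_integral_abs_deriv_smul measurableSet_Ioi
    (fun x (hx : 0 < x) => (hasDerivAt_div_one_add (by linarith)).hasDerivWithinAt)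
    injOn_div_one_add]
  refine setIntegral_congr_fun measurableSet_Ioi fun x _ => ?_
  rw [abs_of_nonneg (by positivity)]

end

lemma smul_beta_integrand_div_one_add {a b x : ℝ} (hx : 0 < x) :
    ((1 + x) ^ 2)⁻¹ • ((x / (1 + x)) ^ (a - 1) * (1 - x / (1 + x)) ^ (b - 1)) =
      x ^ (a - 1) / (1 + x) ^ (a + b) := by
  have h1x : 0 < 1 + x := by linarith
  have hsub : 1 - x / (1 + x) = (1 + x)⁻¹ := by field_simp; ring
  have hpow : (1 + x) ^ (a + b) = (1 + x) ^ 2 * (1 + x) ^ (a - 1) * (1 + x) ^ (b - 1) := by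
    rw [← rpow_natCast, ← rpow_add h1x, ← rpow_add h1x]
    congr 1
    push_cast
    ring
  rw [hsub, div_rpow hx.le h1x.le, inv_rpow h1x.le, hpow, smul_eq_mul]
  field_simp

lemma integrableOn_rpow_div_one_add_rpow {a b : ℝ} (ha : 0 < a) (hb : 0 < b) :
    IntegrableOn (fun s : ℝ => s ^ (a - 1) / (1 + s) ^ (a + b)) (Ioi 0) :=
  ((integrableOn_Ioo_zero_one_iff_integrableOn_Ioi _).1
    (integrableOn_rpow_mul_one_sub_rpow ha hb)).congr_fun
      (fun _ hx => smul_beta_integrand_div_one_add hx) measurableSet_Ioi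

lemma integral_rpow_div_one_add_rpow {a b : ℝ} (ha : 0 < a) (hb : 0 < b) :
    ∫ s in Ioi (0 : ℝ), s ^ (a - 1) / (1 + s) ^ (a + b) =
      Gamma a * Gamma b / Gamma (a + b) := by
  rw [← integral_rpow_mul_one_sub_rpow ha hb, integral_Ioo_zero_one_eq_integral_Ioi]
  exact setIntegral_congr_fun measurableSet_Ioi fun _ hx =>
    (smul_beta_integrand_div_one_add hx).symm

lemma integrableOn_rpow_neg_div_one_add {α : ℝ} (h0 : 0 < α) (h1 : α < 1) :
    IntegrableOn (fun s : ℝ => s ^ (-α) / (1 + s)) (Ioi 0) := by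
  simpa only [sub_sub_cancel_left, sub_add_cancel, rpow_one] using
    integrableOn_rpow_div_one_add_rpow (sub_pos.2 h1) h0

lemma integral_rpow_neg_div_one_add {α : ℝ} (h0 : 0 < α) (h1 : α < 1) :
    ∫ s in Ioi (0 : ℝ), s ^ (-α) / (1 + s) = π / sin (π * α) := by
  have h := integral_rpow_div_one_add_rpow (sub_pos.2 h1) h0
  simp only [sub_sub_cancel_left, sub_add_cancel, rpow_one] at h
  rw [h, Gamma_one, div_one, mul_comm, Gamma_mul_Gamma_one_sub]

namespace ResolventAt

variable {X : Type*} [NormedAddCommGroup X] [NormedSpace ℂ X] {A : X →ₗ.[ℂ] X}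

theorem sub_eq {z w : ℂ} {Rz Rw : X →L[ℂ] X} (hz : ResolventAt A z Rz)
    (hw : ResolventAt A w Rw) : Rz - Rw = (w - z) • (Rz * Rw) := by
  ext y
  obtain ⟨hy, hAy⟩ := hw.2 y
  have h := hz.1 ⟨Rw y, hy⟩
  rw [eq_sub_of_add_eq' hAy, Submodule.coe_mk, map_add, map_sub, map_smul, map_smul] at h
  simp only [sub_apply, smul_apply, mul_apply_eq_comp]
  linear_combination (norm := module) h

end ResolventAt

namespace IsPositive

variable {X : Type*} [NormedAddCommGroup X] [NormedSpace ℂ X] {A : X →ₗ.[ℂ] X} {M : ℝ}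
  {R : ℝ → X →L[ℂ] X}

theorem norm_resolvent_le (hA : IsPositive A M R) {s : ℝ} (hs : 0 ≤ s) :
    ‖R s‖ ≤ M / (1 + s) := by
  rw [le_div_iff₀ (by linarith), mul_comm]
  exact hA.bound s hs

theorem norm_resolvent_le_const (hA : IsPositive A M R) {s : ℝ} (hs : 0 ≤ s) : ‖R s‖ ≤ M :=
  (hA.norm_resolvent_le hs).trans (div_le_self (by linarith [hA.one_le]) (by linarith))

theorem lipschitzOnWith_resolvent (hA : IsPositive A M R) :
    LipschitzOnWith (M ^ 2).toNNReal R (Ici 0) := by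
  refine LipschitzOnWith.of_dist_le_mul fun s (hs : 0 ≤ s) t (ht : 0 ≤ t) => ?_
  have hM : 0 ≤ M := by linarith [hA.one_le]
  rw [dist_eq_norm, (hA.resolvent s hs).sub_eq (hA.resolvent t ht), norm_smul,
    Real.coe_toNNReal _ (sq_nonneg M), Real.dist_eq, ← Complex.ofReal_sub, Complex.norm_real,
    Real.norm_eq_abs, abs_sub_comm, mul_comm]
  gcongr
  calc ‖R s * R t‖ ≤ ‖R s‖ * ‖R t‖ := norm_mul_le _ _
    _ ≤ M * M := mul_le_mul (hA.norm_resolvent_le_const hs) (hA.norm_resolvent_le_const ht)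
        (norm_nonneg _) hM
    _ = M ^ 2 := (sq M).symm

theorem norm_rpow_smul_resolvent_le (hA : IsPositive A M R) (α : ℝ) {s : ℝ} (hs : 0 < s) :
    ‖s ^ (-α) • R s‖ ≤ M * (s ^ (-α) / (1 + s)) := by
  rw [norm_smul, Real.norm_of_nonneg (rpow_nonneg hs.le _), mul_div_assoc', mul_comm M,
    mul_div_assoc]
  exact mul_le_mul_of_nonneg_left (hA.norm_resolvent_le hs.le) (rpow_nonneg hs.le _)

theorem integrableOn_rpow_smul_resolvent (hA : IsPositive A M R) {α : ℝ} (h0 : 0 < α)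
    (h1 : α < 1) : IntegrableOn (fun s : ℝ => s ^ (-α) • R s) (Ioi 0) := by
  refine Integrable.mono' ((integrableOn_rpow_neg_div_one_add h0 h1).const_mul M) ?_
    ((ae_restrict_iff' measurableSet_Ioi).2 (ae_of_all _ fun s hs =>
      hA.norm_rpow_smul_resolvent_le α hs))
  refine ContinuousOn.aestronglyMeasurable ?_ measurableSet_Ioi
  exact (continuousOn_id.rpow_const fun s hs => Or.inl (ne_of_gt hs)).smul
    (hA.lipschitzOnWith_resolvent.continuousOn.mono Ioi_subset_Ici_self)

theorem norm_integral_rpow_smul_resolvent_le (hA : IsPositive A M R) {α : ℝ} (h0 : 0 < α)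
    (h1 : α < 1) : ‖∫ s in Ioi (0 : ℝ), s ^ (-α) • R s‖ ≤ M * (π / sin (π * α)) := by
  rw [← integral_rpow_neg_div_one_add h0 h1, ← integral_const_mul]
  exact norm_integral_le_of_norm_le ((integrableOn_rpow_neg_div_one_add h0 h1).const_mul M)
    ((ae_restrict_iff' measurableSet_Ioi).2 (ae_of_all _ fun s hs =>
      hA.norm_rpow_smul_resolvent_le α hs))

end IsPositive

theorem stmt1_general {X : Type*} [NormedAddCommGroup X] [NormedSpace ℂ X]
    (M : ℝ) (A : X →ₗ.[ℂ] X) (R : ℝ → X →L[ℂ] X) (hA : IsPositive A M R)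
    (α : ℝ) (hα : α ∈ Ioo (0 : ℝ) 1) :
    IntegrableOn (fun s : ℝ => s ^ (-α) • R s) (Ioi 0) ∧
    ‖negPow R α‖ ≤ M := by
  obtain ⟨h0, h1⟩ := hα
  refine ⟨hA.integrableOn_rpow_smul_resolvent h0 h1, ?_⟩
  have hsin : 0 < sin (π * α) := sin_pos_of_pos_of_lt_pi (by positivity) (by nlinarith [pi_pos])
  calc ‖negPow R α‖ = sin (π * α) / π * ‖∫ s in Ioi (0 : ℝ), s ^ (-α) • R s‖ := by
        rw [negPow, norm_smul, Real.norm_of_nonneg (by positivity)]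
    _ ≤ sin (π * α) / π * (M * (π / sin (π * α))) := by
        gcongr
        exact hA.norm_integral_rpow_smul_resolvent_le h0 h1
    _ = M := by field_simp

theorem stmt1 {X : Type*} [NormedAddCommGroup X] [NormedSpace ℂ X] [CompleteSpace X]
    (M : ℝ) (A : X →ₗ.[ℂ] X) (R : ℝ → X →L[ℂ] X) (hA : IsPositive A M R)
    (α : ℝ) (hα : α ∈ Ioo (0 : ℝ) 1) :
    IntegrableOn (fun s : ℝ => s ^ (-α) • R s) (Ioi 0) ∧
    ‖negPow R α‖ ≤ M :=
  stmt1_general M A R hA α hα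
end
end

section
/- Let X be a complex Banach space and A a positive operator on X. Define Λ₄ on X × X × X with domain D(A) × D(A) × X by Λ₄(u,v,w) = (−w, Av, Au). Then for every s ∈ [0,∞), s + Λ₄ : D(A) × D(A) × X → X × X × X is bijective, and its inverse is given by (x,y,z) ↦ ( s(s²+A)^{-1}x + (s²+A)^{-1}z, (s+A)^{-1}y, −A(s²+A)^{-1}x + s(s²+A)^{-1}z ), where (s²+A)^{-1} ∈ L(X) exists since s² ≥ 0 and −A(s²+A)^{-1} = s²(s²+A)^{-1} − I. -/
open MeasureTheory Real Set

noncomputable section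

/-- First component of the claimed inverse of `s + Λ₄`: `s(s²+A)⁻¹ x + (s²+A)⁻¹ z`. -/
def Q1 {X : Type*} [NormedAddCommGroup X] [NormedSpace ℂ X]
    (R : ℝ → X →L[ℂ] X) (s : ℝ) (p : X × X × X) : X :=
  s • (R (s ^ 2)) p.1 + (R (s ^ 2)) p.2.2

/-- Third component of the claimed inverse of `s + Λ₄`:
`-A(s²+A)⁻¹ x + s(s²+A)⁻¹ z`, written via `-A(s²+A)⁻¹ = s²(s²+A)⁻¹ - I`. -/
def Q3 {X : Type*} [NormedAddCommGroup X] [NormedSpace ℂ X]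
    (R : ℝ → X →L[ℂ] X) (s : ℝ) (p : X × X × X) : X :=
  s ^ 2 • (R (s ^ 2)) p.1 - p.1 + s • (R (s ^ 2)) p.2.2

/-- with `Λ₄(u,v,w) = (-w, Av, Au)` on `D(A) × D(A) × X`, for every
`s ≥ 0` the operator `s + Λ₄` is bijective with inverse
`(x,y,z) ↦ (s(s²+A)⁻¹x + (s²+A)⁻¹z, (s+A)⁻¹y, -A(s²+A)⁻¹x + s(s²+A)⁻¹z)`,
where `(s²+A)⁻¹ = R (s²)` exists since `s² ≥ 0`. -/
theorem stmt16 {X : Type*} [NormedAddCommGroup X] [NormedSpace ℂ X] [CompleteSpace X]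
    (M : ℝ) (A : X →ₗ.[ℂ] X) (R : ℝ → X →L[ℂ] X) (hA : IsPositive A M R)
    (s : ℝ) (hs : 0 ≤ s) :
    -- left inverse: `T ∘ (s + Λ₄) = id` on `D(A) × D(A) × X`
    (∀ (u v : A.domain) (w : X),
      Q1 R s ((s : ℂ) • (u : X) - w, (s : ℂ) • (v : X) + A v, A u + (s : ℂ) • w) = (u : X) ∧
      (R s) ((s : ℂ) • (v : X) + A v) = (v : X) ∧
      Q3 R s ((s : ℂ) • (u : X) - w, (s : ℂ) • (v : X) + A v, A u + (s : ℂ) • w) = w) ∧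
    -- right inverse: `(s + Λ₄) ∘ T = id` on `X × X × X`
    (∀ p : X × X × X,
      ∃ (h1 : Q1 R s p ∈ A.domain) (h2 : (R s) p.2.1 ∈ A.domain),
        (s : ℂ) • Q1 R s p - Q3 R s p = p.1 ∧
        (s : ℂ) • (R s) p.2.1 + A ⟨(R s) p.2.1, h2⟩ = p.2.1 ∧
        A ⟨Q1 R s p, h1⟩ + (s : ℂ) • Q3 R s p = p.2.2) := by
  obtain ⟨L2, R2⟩ := hA.resolvent (s ^ 2) (sq_nonneg s)
  obtain ⟨L1, R1⟩ := hA.resolvent s hs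
  have cast2 : ((s ^ 2 : ℝ) : ℂ) = (s : ℂ) ^ 2 := by push_cast; ring
  constructor
  · intro u v w
    -- key identity
    have key : (s : ℂ) • (R (s ^ 2)) ((s : ℂ) • (u : X) - w)
        + (R (s ^ 2)) (A u + (s : ℂ) • w) = (u : X) := by
      have h := L2 u
      rw [cast2] at h
      calc (s : ℂ) • (R (s ^ 2)) ((s : ℂ) • (u : X) - w)
            + (R (s ^ 2)) (A u + (s : ℂ) • w)
          = (R (s ^ 2)) ((s : ℂ) • ((s : ℂ) • (u : X) - w) + (A u + (s : ℂ) • w)) := by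
            simp only [map_add, (R (s ^ 2)).map_smul]
        _ = (R (s ^ 2)) ((s : ℂ) ^ 2 • (u : X) + A u) := by
            congr 1
            module
        _ = (u : X) := h
    refine ⟨?_, L1 v, ?_⟩
    · simp only [Q1, ← Complex.coe_smul]
      exact key
    · simp only [Q3, ← Complex.coe_smul]
      have h2 : ((s : ℂ) ^ 2) • (R (s ^ 2)) ((s : ℂ) • (u : X) - w)
          + (s : ℂ) • (R (s ^ 2)) (A u + (s : ℂ) • w) = (s : ℂ) • (u : X) := by
        rw [sq, ← smul_smul, ← smul_add, key]
      push_cast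
      rw [sub_add_eq_add_sub, h2]
      abel
  · intro ⟨x, y, z⟩
    obtain ⟨hx, ex⟩ := R2 x
    obtain ⟨hz, ez⟩ := R2 z
    obtain ⟨hy, ey⟩ := R1 y
    rw [cast2] at ex ez
    have hq1 : Q1 R s (x, y, z) = (s : ℂ) • (R (s ^ 2)) x + (R (s ^ 2)) z := by
      simp [Q1, ← Complex.coe_smul]
    have hq3 : Q3 R s (x, y, z)
        = (s : ℂ) ^ 2 • (R (s ^ 2)) x - x + (s : ℂ) • (R (s ^ 2)) z := by
      simp only [Q3, ← Complex.coe_smul]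
      push_cast
      ring_nf
    have h1 : Q1 R s (x, y, z) ∈ A.domain := by
      rw [hq1]
      exact A.domain.add_mem (A.domain.smul_mem _ hx) hz
    refine ⟨h1, hy, ?_, ey, ?_⟩
    · rw [hq1, hq3]
      show _ = x
      module
    · have hax : A ⟨(R (s ^ 2)) x, hx⟩ = x - (s : ℂ) ^ 2 • (R (s ^ 2)) x := by
        rw [eq_sub_iff_add_eq, add_comm]; exact ex
      have haz : A ⟨(R (s ^ 2)) z, hz⟩ = z - (s : ℂ) ^ 2 • (R (s ^ 2)) z := by
        rw [eq_sub_iff_add_eq, add_comm]; exact ez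
      have heq : (⟨Q1 R s (x, y, z), h1⟩ : A.domain)
          = (s : ℂ) • (⟨(R (s ^ 2)) x, hx⟩ : A.domain) + ⟨(R (s ^ 2)) z, hz⟩ := by
        ext; simpa using hq1
      rw [heq, A.map_add, A.map_smul, hax, haz, hq3]
      show _ = z
      module
end
end
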